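/- arXiv:1912.09574 — 7 statements merged into one kernel-verified Lean document; each statement's English description precedes it below -/
import Mathlib

section
/- Define Ψ(λ) = [(μ_P+η) - λ]·[-(β_P-μ_P-γ) - λ]/(β_P γ) on the interval (0, min(μ_P+η, -(β_P-μ_P-γ))). Under the assumptions β_P, μ_P, η, γ > 0, β_P > μ_P, β_P < μ_P + η, and (β_P-μ_P-γ)(μ_P+η) + β_P γ < 0, the function Ψ is strictly decreasing on this interval, Ψ(0) > 1, and there exists a unique λ* in this interval with Ψ(λ*) = 1. -/
/-!
Write `Ψ(λ) = (a - λ)(b - λ)/c` with `a = μ_P + η`, `b = μ_P + γ - β_P`, `c = β_P γ`. Below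
`min a b` both factors are nonnegative and strictly decreasing, so `Ψ` is strictly decreasing
there; `Ψ(0) = ab/c > 1` is the last hypothesis and `Ψ(min a b) = 0`, so the intermediate value
theorem gives a root of `Ψ = 1`, unique by strict monotonicity.
-/

open Set

theorem sub_min_mul_sub_min {α : Type*} [CommRing α] [LinearOrder α] (a b : α) :
    (a - min a b) * (b - min a b) = 0 := by
  rcases min_choice a b with h | h <;> simp [h]

theorem strictAntiOn_sub_mul_sub {α : Type*} [CommRing α] [LinearOrder α] [IsStrictOrderedRing α]
    (a b : α) : StrictAntiOn (fun x => (a - x) * (b - x)) (Iic (min a b)) := by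
  intro x hx y hy hxy
  have hya : 0 ≤ a - y := sub_nonneg.2 (le_trans hy (min_le_left a b))
  have hyb : 0 < b - x := sub_pos.2 (lt_of_lt_of_le hxy (le_trans hy (min_le_right a b)))
  have hxy' : 0 < y - x := sub_pos.2 hxy
  calc (a - y) * (b - y) < (a - y) * (b - y) + (y - x) * (b - x) + (a - y) * (y - x) := by
        nlinarith [mul_pos hxy' hyb, mul_nonneg hya hxy'.le]
    _ = (a - x) * (b - x) := by ring

theorem strictAntiOn_sub_mul_sub_div {α : Type*} [Field α] [LinearOrder α] [IsStrictOrderedRing α]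
    (a b : α) {c : α} (hc : 0 < c) :
    StrictAntiOn (fun x => (a - x) * (b - x) / c) (Iic (min a b)) :=
  fun _ hx _ hy hxy => div_lt_div_of_pos_right (strictAntiOn_sub_mul_sub a b hx hy hxy) hc

theorem existsUnique_mem_Ioo_eq_of_injOn {α δ : Type*} [ConditionallyCompleteLinearOrder α]
    [TopologicalSpace α] [OrderTopology α] [DenselyOrdered α] [LinearOrder δ]
    [TopologicalSpace δ] [OrderClosedTopology δ] {a b : α} {f : α → δ} {t : δ} (hab : a ≤ b)
    (hf : ContinuousOn f (Icc a b)) (hinj : InjOn f (Ioo a b)) (ht : t ∈ Ioo (f b) (f a)) :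
    ∃! x, x ∈ Ioo a b ∧ f x = t := by
  obtain ⟨x, hx, hfx⟩ := intermediate_value_Ioo' hab hf ht
  exact ⟨x, ⟨hx, hfx⟩, fun y ⟨hy, hfy⟩ => hinj hy hx (hfy.trans hfx.symm)⟩

theorem Psi_strictAnti_and_unique_root_general (βP μP η γ : ℝ)
    (hβP : 0 < βP) (hγ : 0 < γ)
    (h2 : βP - μP - η < 0)
    (hext : (βP - μP - γ) * (μP + η) + βP * γ < 0) :
    StrictAntiOn (fun lam : ℝ => (μP + η - lam) * (μP + γ - βP - lam) / (βP * γ))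
      (Set.Ioo 0 (min (μP + η) (μP + γ - βP))) ∧
    1 < (μP + η - 0) * (μP + γ - βP - 0) / (βP * γ) ∧
    ∃! lam : ℝ, lam ∈ Set.Ioo 0 (min (μP + η) (μP + γ - βP)) ∧
      (μP + η - lam) * (μP + γ - βP - lam) / (βP * γ) = 1 := by
  have ha : 0 < μP + η := by linarith
  have hc : 0 < βP * γ := mul_pos hβP hγ
  have hab : βP * γ < (μP + η) * (μP + γ - βP) := by linarith
  have hb : 0 < μP + γ - βP := pos_of_mul_pos_right (hc.trans hab) ha.le
  have hanti := (strictAntiOn_sub_mul_sub_div (μP + η) (μP + γ - βP) hc).mono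
    ((Ioo_subset_Iio_self (a := 0)).trans Iio_subset_Iic_self)
  have hΨ0 : 1 < (μP + η - 0) * (μP + γ - βP - 0) / (βP * γ) := by
    rwa [sub_zero, sub_zero, one_lt_div hc]
  refine ⟨hanti, hΨ0, existsUnique_mem_Ioo_eq_of_injOn (lt_min ha hb).le (by fun_prop)
    hanti.injOn ⟨?_, hΨ0⟩⟩
  rw [sub_min_mul_sub_min, zero_div]
  exact one_pos

theorem Psi_strictAnti_and_unique_root (βP μP η γ : ℝ)
    (hβP : 0 < βP) (hμP : 0 < μP) (hη : 0 < η) (hγ : 0 < γ)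
    (h1 : 0 < βP - μP) (h2 : βP - μP - η < 0)
    (hext : (βP - μP - γ) * (μP + η) + βP * γ < 0) :
    StrictAntiOn (fun lam : ℝ => (μP + η - lam) * (μP + γ - βP - lam) / (βP * γ))
      (Set.Ioo 0 (min (μP + η) (μP + γ - βP))) ∧
    1 < (μP + η - 0) * (μP + γ - βP - 0) / (βP * γ) ∧
    ∃! lam : ℝ, lam ∈ Set.Ioo 0 (min (μP + η) (μP + γ - βP)) ∧
      (μP + η - lam) * (μP + γ - βP - lam) / (βP * γ) = 1 :=
  Psi_strictAnti_and_unique_root_general βP μP η γ hβP hγ h2 hext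
end

section
/- Under the standing assumptions, the system N' = (β_N-μ_N)N - δN² - κNP_S, P_S' = -(μ_P+η)P_S - ρκNP_S + γP_H, P_H' = -μ_P P_H + ρκNP_S - γP_H + β_P(P_S+P_H) has an equilibrium (N*, P_S*, P_H*) with all coordinates strictly positive if and only if (β_N-μ_N)(β_P-μ_P)κρ + δ(β_P-μ_P)(μ_P+η) > -δγ(β_P-μ_P-η), and in that case this positive equilibrium is unique, with N* = [-(β_P-μ_P)(μ_P+η) - γ(β_P-μ_P-η)]/[(β_P-μ_P)κρ], P_S* = ((β_N-μ_N) - δN*)/κ, and P_H* = -((β_P-μ_P-η)/(β_P-μ_P))P_S*. -/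
/-!
Adding the two predator equations eliminates the predation terms and leaves the linear balance
`(βP - μP - η) PS + (βP - μP) PH = 0`. Feeding it back into the `PS`-equation and dividing by
`PS ≠ 0` pins down `N`, and dividing the prey equation by `N ≠ 0` then gives `PS`, so an interior
equilibrium is unique. Conversely that candidate solves the system; `N* > 0` and `PH* > 0` hold
under the standing assumptions, and `PS* > 0` is exactly the stated inequality.
-/

section Equilibrium

variable (βN μN δ κ ρ γ βP μP η : ℝ)

def IsEquilibrium (N PS PH : ℝ) : Prop :=
  (βN - μN) * N - δ * N ^ 2 - κ * N * PS = 0 ∧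
    -(μP + η) * PS - ρ * κ * N * PS + γ * PH = 0 ∧
    -μP * PH + ρ * κ * N * PS - γ * PH + βP * (PS + PH) = 0

variable {βN μN δ κ ρ γ βP μP η} {N PS PH : ℝ}

namespace IsEquilibrium

theorem prey_relation (h : IsEquilibrium βN μN δ κ ρ γ βP μP η N PS PH) (hN : N ≠ 0) :
    κ * PS = (βN - μN) - δ * N := by
  have hfac : N * ((βN - μN) - δ * N - κ * PS) = 0 := by linear_combination h.1
  linarith [(mul_eq_zero.1 hfac).resolve_left hN]

theorem predator_balance (h : IsEquilibrium βN μN δ κ ρ γ βP μP η N PS PH) :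
    (βP - μP - η) * PS + (βP - μP) * PH = 0 := by
  linear_combination h.2.1 + h.2.2

theorem consumption_relation (h : IsEquilibrium βN μN δ κ ρ γ βP μP η N PS PH) (hPS : PS ≠ 0) :
    (βP - μP) * κ * ρ * N = -((βP - μP) * (μP + η)) - γ * (βP - μP - η) := by
  have hfac : ((-((βP - μP) * (μP + η)) - γ * (βP - μP - η)) - (βP - μP) * κ * ρ * N) * PS = 0 := by
    linear_combination (βP - μP) * h.2.1 - γ * h.predator_balance
  linarith [(mul_eq_zero.1 hfac).resolve_right hPS]

end IsEquilibrium

theorem isEquilibrium_iff (hb : βP - μP ≠ 0) (hκ : κ ≠ 0) (hρ : ρ ≠ 0) (hN : N ≠ 0)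
    (hPS : PS ≠ 0) :
    IsEquilibrium βN μN δ κ ρ γ βP μP η N PS PH ↔
      N = (-((βP - μP) * (μP + η)) - γ * (βP - μP - η)) / ((βP - μP) * κ * ρ) ∧
        PS = ((βN - μN) - δ * N) / κ ∧ PH = -((βP - μP - η) / (βP - μP)) * PS := by
  constructor
  · intro h
    refine ⟨?_, ?_, ?_⟩
    · rw [eq_div_iff (by simp [hb, hκ, hρ]), ← h.consumption_relation hPS]
      ring
    · rw [eq_div_iff hκ, mul_comm, h.prey_relation hN]
    · field_simp
      linear_combination h.predator_balance
  · rintro ⟨rfl, rfl, rfl⟩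
    refine ⟨?_, ?_, ?_⟩ <;> field_simp <;> ring

theorem prey_surplus_pos_iff (hden : 0 < (βP - μP) * κ * ρ) :
    0 < (βN - μN) - δ * ((-((βP - μP) * (μP + η)) - γ * (βP - μP - η)) / ((βP - μP) * κ * ρ)) ↔
      (βN - μN) * (βP - μP) * κ * ρ + δ * (βP - μP) * (μP + η) > -(δ * γ * (βP - μP - η)) := by
  rw [sub_pos, mul_div_assoc', div_lt_iff₀ hden, gt_iff_lt, ← sub_pos, ← sub_pos (a := _ + _)]
  ring_nf

end Equilibrium

theorem interior_equilibrium_exists_iff_general (βN μN δ κ ρ γ βP μP η Nstar : ℝ)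
    (hκ : 0 < κ) (hρ : 0 < ρ)
    (hP : μP < βP) (hPη : βP < μP + η)
    (hext : (βP - μP - γ) * (μP + η) + βP * γ < 0)
    (hNstar : Nstar = (-((βP - μP) * (μP + η)) - γ * (βP - μP - η)) / ((βP - μP) * κ * ρ)) :
    ((∃ N PS PH : ℝ, 0 < N ∧ 0 < PS ∧ 0 < PH ∧
        (βN - μN) * N - δ * N ^ 2 - κ * N * PS = 0 ∧
        -(μP + η) * PS - ρ * κ * N * PS + γ * PH = 0 ∧
        -μP * PH + ρ * κ * N * PS - γ * PH + βP * (PS + PH) = 0) ↔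
      (βN - μN) * (βP - μP) * κ * ρ + δ * (βP - μP) * (μP + η) > -(δ * γ * (βP - μP - η))) ∧
    (∀ N PS PH : ℝ, 0 < N → 0 < PS → 0 < PH →
      (βN - μN) * N - δ * N ^ 2 - κ * N * PS = 0 →
      -(μP + η) * PS - ρ * κ * N * PS + γ * PH = 0 →
      -μP * PH + ρ * κ * N * PS - γ * PH + βP * (PS + PH) = 0 →
      N = Nstar ∧ PS = ((βN - μN) - δ * Nstar) / κ ∧
        PH = -((βP - μP - η) / (βP - μP)) * (((βN - μN) - δ * Nstar) / κ)) := by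
  subst hNstar
  have hb : 0 < βP - μP := sub_pos.2 hP
  have hden : 0 < (βP - μP) * κ * ρ := by positivity
  have hNstar_pos : 0 < (-((βP - μP) * (μP + η)) - γ * (βP - μP - η)) / ((βP - μP) * κ * ρ) :=
    div_pos (by linear_combination hext) hden
  have hchar (N PS PH : ℝ) (hN : 0 < N) (hPS : 0 < PS) :=
    @isEquilibrium_iff βN μN δ κ ρ γ βP μP η N PS PH hb.ne' hκ.ne' hρ.ne' hN.ne' hPS.ne'
  refine ⟨⟨?_, ?_⟩, ?_⟩
  · rintro ⟨N, PS, PH, hN, hPS, -, h⟩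
    obtain ⟨rfl, rfl, -⟩ := (hchar N PS PH hN hPS).1 h
    exact (prey_surplus_pos_iff hden).1 ((div_pos_iff_of_pos_right hκ).1 hPS)
  · intro hcond
    have hPS := div_pos ((prey_surplus_pos_iff hden).2 hcond) hκ
    have hPH := mul_pos (neg_pos.2 (div_neg_of_neg_of_pos (by linarith : βP - μP - η < 0) hb)) hPS
    exact ⟨_, _, _, hNstar_pos, hPS, hPH, (hchar _ _ _ hNstar_pos hPS).2 ⟨rfl, rfl, rfl⟩⟩
  · intro N PS PH hN hPS _ e1 e2 e3
    obtain ⟨rfl, rfl, rfl⟩ := (hchar N PS PH hN hPS).1 ⟨e1, e2, e3⟩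
    exact ⟨rfl, rfl, rfl⟩

theorem interior_equilibrium_exists_iff (βN μN δ κ ρ γ βP μP η Nstar : ℝ)
    (hβN : 0 < βN) (hμN : 0 < μN) (hδ : 0 < δ) (hκ : 0 < κ) (hρ : 0 < ρ)
    (hγ : 0 < γ) (hβP : 0 < βP) (hμP : 0 < μP) (hη : 0 < η)
    (hN : μN < βN) (hP : μP < βP) (hPη : βP < μP + η)
    (hext : (βP - μP - γ) * (μP + η) + βP * γ < 0)
    (hNstar : Nstar = (-((βP - μP) * (μP + η)) - γ * (βP - μP - η)) / ((βP - μP) * κ * ρ)) :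
    ((∃ N PS PH : ℝ, 0 < N ∧ 0 < PS ∧ 0 < PH ∧
        (βN - μN) * N - δ * N ^ 2 - κ * N * PS = 0 ∧
        -(μP + η) * PS - ρ * κ * N * PS + γ * PH = 0 ∧
        -μP * PH + ρ * κ * N * PS - γ * PH + βP * (PS + PH) = 0) ↔
      (βN - μN) * (βP - μP) * κ * ρ + δ * (βP - μP) * (μP + η) > -(δ * γ * (βP - μP - η))) ∧
    (∀ N PS PH : ℝ, 0 < N → 0 < PS → 0 < PH →
      (βN - μN) * N - δ * N ^ 2 - κ * N * PS = 0 →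
      -(μP + η) * PS - ρ * κ * N * PS + γ * PH = 0 →
      -μP * PH + ρ * κ * N * PS - γ * PH + βP * (PS + PH) = 0 →
      N = Nstar ∧ PS = ((βN - μN) - δ * Nstar) / κ ∧
        PH = -((βP - μP - η) / (βP - μP)) * (((βN - μN) - δ * Nstar) / κ)) :=
  interior_equilibrium_exists_iff_general βN μN δ κ ρ γ βP μP η Nstar hκ hρ hP hPη hext hNstar
end

section
/- Let N̂ = (β_N - μ_N)/δ. The Jacobian of system (1.1) at E₂ = (N̂, 0, 0) has eigenvalue -(β_N - μ_N) < 0 and two further eigenvalues given by the roots of λ² + aλ + b = 0 with a = (μ_P + η + ρκN̂) - (β_P - μ_P - γ) > 0 and b = (μ_P + γ - β_P)(μ_P + η + ρκN̂) - γ(ρκN̂ + β_P). Hence E₂ is locally asymptotically stable (all eigenvalues have negative real part) if and only if b > 0, which is equivalent to (β_N - μ_N)(β_P - μ_P)κρ + δ(β_P - μ_P)(μ_P + η) < -δγ(β_P - μ_P - η). -/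
open Polynomial

/-! The Jacobian at `E₂` is block upper triangular, so its characteristic polynomial factors as
`(X + (β_N - μ_N)) · (X² + aX + b)`. Since `a > 0`, the Routh–Hurwitz criterion for the quadratic
factor applies: if `b > 0`, a complex root either is real, and then negative, or has real part
`-a/2`; if `b ≤ 0`, the quadratic has a nonnegative real root. Multiplying `b` by `δ > 0` turns
`b > 0` into the stated inequality between the parameters. -/

theorem Matrix.charpoly_fin_three_of_col_zero {R : Type*} [CommRing R] (p q t r s u v : R) :
    charpoly !![p, q, t; 0, r, s; 0, u, v] =
      (X - C p) * (X ^ 2 - C (r + v) * X + C (r * v - s * u)) := by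
  rw [charpoly, det_fin_three]
  simp only [Fin.isValue, charmatrix_apply_eq, charmatrix_apply_ne, of_apply, cons_val',
    cons_val_zero, cons_val_fin_one, cons_val_one, cons_val, ne_eq, Fin.reduceEq,
    not_false_eq_true, mul_neg, neg_mul, neg_neg, zero_ne_one, one_ne_zero, map_zero, neg_zero,
    mul_zero, zero_mul, sub_zero, add_zero, map_add, map_sub, map_mul]
  ring

theorem Complex.re_neg_of_sq_add_mul_add_eq_zero {a b : ℝ} (ha : 0 < a) (hb : 0 < b) {z : ℂ}
    (hz : z ^ 2 + a * z + b = 0) : z.re < 0 := by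
  have hre : z.re ^ 2 - z.im ^ 2 + a * z.re + b = 0 := by
    simpa [sq] using congrArg Complex.re hz
  have him : z.im * (2 * z.re + a) = 0 := by
    have := congrArg Complex.im hz
    simp only [sq, mul_im, add_im, ofReal_re, ofReal_im, zero_im] at this
    linear_combination this
  rcases mul_eq_zero.mp him with h | h
  · rw [h] at hre
    nlinarith
  · linarith

theorem Real.exists_nonneg_sq_add_mul_add_eq_zero (a : ℝ) {b : ℝ} (hb : b ≤ 0) :
    ∃ x : ℝ, 0 ≤ x ∧ x ^ 2 + a * x + b = 0 := by
  have hdisc : 0 ≤ a ^ 2 - 4 * b := by nlinarith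
  set s := √(a ^ 2 - 4 * b)
  have hs : s ^ 2 = a ^ 2 - 4 * b := Real.sq_sqrt hdisc
  have has : a ≤ s := Real.le_sqrt_of_sq_le (by linarith)
  exact ⟨(-a + s) / 2, by linarith, by linear_combination hs / 4⟩

theorem forall_re_neg_of_isRoot_linear_mul_quadratic_iff {a b c : ℝ} (hc : 0 < c) (ha : 0 < a) :
    (∀ z : ℂ, (((X + C c) * (X ^ 2 + C a * X + C b)).map Complex.ofRealHom).IsRoot z →
      z.re < 0) ↔ 0 < b := by
  simp only [Polynomial.map_mul, Polynomial.map_add, Polynomial.map_pow, map_X, map_C, IsRoot,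
    eval_mul, eval_add, eval_pow, eval_X, eval_C, mul_eq_zero, Complex.ofRealHom_eq_coe]
  constructor
  · intro hall
    by_contra! hb
    obtain ⟨x, hx, hroot⟩ := Real.exists_nonneg_sq_add_mul_add_eq_zero a hb
    have := hall x (Or.inr (by exact_mod_cast hroot))
    rw [Complex.ofReal_re] at this
    linarith
  · rintro hb z (hlin | hquad)
    · rw [eq_neg_of_add_eq_zero_left hlin, Complex.neg_re, Complex.ofReal_re]
      linarith
    · exact Complex.re_neg_of_sq_add_mul_add_eq_zero ha hb hquad

theorem E2_stability_criterion_general (βN μN δ κ ρ γ βP μP η : ℝ)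
    (hδ : 0 < δ) (hκ : 0 < κ) (hρ : 0 < ρ)
    (hγ : 0 < γ) (hμP : 0 < μP)
    (hN : μN < βN) (hPη : βP < μP + η) :
    let Nhat := (βN - μN) / δ
    let J : Matrix (Fin 3) (Fin 3) ℝ :=
      !![-(βN - μN), -(κ * Nhat), 0;
         0, -(μP + η) - ρ * κ * Nhat, γ;
         0, ρ * κ * Nhat + βP, βP - μP - γ]
    let a := (μP + η + ρ * κ * Nhat) - (βP - μP - γ)
    let b := (μP + γ - βP) * (μP + η + ρ * κ * Nhat) - γ * (ρ * κ * Nhat + βP)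
    Matrix.charpoly J = (X + C (βN - μN)) * (X ^ 2 + C a * X + C b) ∧
    (Matrix.charpoly J).IsRoot (-(βN - μN)) ∧ -(βN - μN) < 0 ∧
    0 < a ∧
    ((∀ z : ℂ, (Matrix.charpoly (J.map (Complex.ofReal))).IsRoot z → z.re < 0) ↔ 0 < b) ∧
    (0 < b ↔
      (βN - μN) * (βP - μP) * κ * ρ + δ * (βP - μP) * (μP + η) < -(δ * γ * (βP - μP - η))) := by
  intro Nhat J a b
  have hc : 0 < βN - μN := sub_pos.mpr hN
  have hρκN : 0 < ρ * κ * Nhat := by positivity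
  have ha : 0 < a := by linarith
  have hchar : J.charpoly = (X + C (βN - μN)) * (X ^ 2 + C a * X + C b) := by
    rw [Matrix.charpoly_fin_three_of_col_zero]
    simp only [a, b, map_sub, map_add, map_mul, map_neg]
    ring
  have hbδ : b * δ = -((βN - μN) * (βP - μP) * κ * ρ + δ * (βP - μP) * (μP + η)
      + δ * γ * (βP - μP - η)) := by
    simp only [b, Nhat]
    field_simp
    ring
  refine ⟨hchar, by simp [hchar], neg_neg_of_pos hc, ha, ?_, ?_⟩
  · rw [show J.map Complex.ofReal = J.map Complex.ofRealHom from rfl, Matrix.charpoly_map, hchar]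
    exact forall_re_neg_of_isRoot_linear_mul_quadratic_iff hc ha
  · rw [← mul_pos_iff_of_pos_right hδ, hbδ]
    constructor <;> intro h <;> linarith

theorem E2_stability_criterion (βN μN δ κ ρ γ βP μP η : ℝ)
    (hβN : 0 < βN) (hμN : 0 < μN) (hδ : 0 < δ) (hκ : 0 < κ) (hρ : 0 < ρ)
    (hγ : 0 < γ) (hβP : 0 < βP) (hμP : 0 < μP) (hη : 0 < η)
    (hN : μN < βN) (hP : μP < βP) (hPη : βP < μP + η)
    (hext : (βP - μP - γ) * (μP + η) + βP * γ < 0) :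
    let Nhat := (βN - μN) / δ
    let J : Matrix (Fin 3) (Fin 3) ℝ :=
      !![-(βN - μN), -(κ * Nhat), 0;
         0, -(μP + η) - ρ * κ * Nhat, γ;
         0, ρ * κ * Nhat + βP, βP - μP - γ]
    let a := (μP + η + ρ * κ * Nhat) - (βP - μP - γ)
    let b := (μP + γ - βP) * (μP + η + ρ * κ * Nhat) - γ * (ρ * κ * Nhat + βP)
    Matrix.charpoly J = (X + C (βN - μN)) * (X ^ 2 + C a * X + C b) ∧
    (Matrix.charpoly J).IsRoot (-(βN - μN)) ∧ -(βN - μN) < 0 ∧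
    0 < a ∧
    ((∀ z : ℂ, (Matrix.charpoly (J.map (Complex.ofReal))).IsRoot z → z.re < 0) ↔ 0 < b) ∧
    (0 < b ↔
      (βN - μN) * (βP - μP) * κ * ρ + δ * (βP - μP) * (μP + η) < -(δ * γ * (βP - μP - η))) :=
  E2_stability_criterion_general βN μN δ κ ρ γ βP μP η hδ hκ hρ hγ hμP hN hPη
end

section
/- Under the assumptions μ_P + γ - β_P > 0, μ_P + η > β_P, β_P > 0, ρ, κ, N̂ > 0 and (μ_P + η + ρκN̂)(μ_P + γ - β_P) > γ(β_P + ρκN̂), there exist constants c₁ > 0 and c₂ > 0 with c₂ = c₁ + 1/ρ such that -c₁(μ_P+η) - c₁ρκN̂ + c₂ρκN̂ + c₂β_P < 0 and -c₂μ_P + c₁γ - c₂γ + c₂β_P < 0. -/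
/-!
With `c₁ = x / ρ` the two inequalities become `ρ κ N̂ + β_P < x (μ_P + η - β_P)`
and `x (β_P - μ_P) < μ_P + γ - β_P`. Since
`(μ_P + η + ρκN̂)(μ_P + γ - β_P) - γ(β_P + ρκN̂) = (μ_P + η - β_P)(μ_P + γ - β_P) - (ρκN̂ + β_P)(β_P - μ_P)`,
the stability condition says exactly that the least admissible `x` for the first one satisfies
the second strictly, so any `x` slightly larger satisfies both.
-/

open Filter Topology

lemma exists_gt_mul_lt_of_mul_lt {a d u : ℝ} (h : a * d < u) : ∃ x, a < x ∧ x * d < u := by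
  have hgt : ∀ᶠ x in 𝓝[>] a, a < x := self_mem_nhdsWithin
  have hlt : ∀ᶠ x in 𝓝[>] a, x * d < u := nhdsWithin_le_nhds <|
    (continuous_mul_const d).continuousAt.eventually_lt continuousAt_const h
  exact (hgt.and hlt).exists

theorem lyapunov_coefficients_exist_general (μP η γ βP ρ κ Nhat : ℝ)
    (hβP : 0 < βP)
    (hρ : 0 < ρ) (hκ : 0 < κ) (hNhat : 0 < Nhat)
    (h2 : βP < μP + η)
    (hstab : γ * (βP + ρ * κ * Nhat) < (μP + η + ρ * κ * Nhat) * (μP + γ - βP)) :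
    ∃ c1 c2 : ℝ, 0 < c1 ∧ 0 < c2 ∧ c2 = c1 + 1 / ρ ∧
      -c1 * (μP + η) - c1 * ρ * κ * Nhat + c2 * ρ * κ * Nhat + c2 * βP < 0 ∧
      -c2 * μP + c1 * γ - c2 * γ + c2 * βP < 0 := by
  have hgap : 0 < μP + η - βP := by linarith
  have hKβ : 0 < ρ * κ * Nhat + βP := by positivity
  have hstab' : (ρ * κ * Nhat + βP) / (μP + η - βP) * (βP - μP) < μP + γ - βP := by
    rw [div_mul_eq_mul_div, div_lt_iff₀ hgap]
    linear_combination hstab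
  obtain ⟨x, hx, hxB⟩ := exists_gt_mul_lt_of_mul_lt hstab'
  have hxA : ρ * κ * Nhat + βP < x * (μP + η - βP) := (div_lt_iff₀ hgap).1 hx
  have hx0 : 0 < x := pos_of_mul_pos_left (hKβ.trans hxA) hgap.le
  refine ⟨x / ρ, x / ρ + 1 / ρ, by positivity, by positivity, rfl, ?_, ?_⟩
  · have hfirst : -(x / ρ) * (μP + η) - x / ρ * ρ * κ * Nhat + (x / ρ + 1 / ρ) * ρ * κ * Nhat
        + (x / ρ + 1 / ρ) * βP = (ρ * κ * Nhat + βP - x * (μP + η - βP)) / ρ := by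
      field_simp; ring
    rw [hfirst]
    exact div_neg_of_neg_of_pos (by linarith) hρ
  · have hsecond : -(x / ρ + 1 / ρ) * μP + x / ρ * γ - (x / ρ + 1 / ρ) * γ + (x / ρ + 1 / ρ) * βP
        = (x * (βP - μP) - (μP + γ - βP)) / ρ := by
      field_simp; ring
    rw [hsecond]
    exact div_neg_of_neg_of_pos (by linarith) hρ

theorem lyapunov_coefficients_exist (μP η γ βP ρ κ Nhat : ℝ)
    (hμP : 0 < μP) (hη : 0 < η) (hγ : 0 < γ) (hβP : 0 < βP)
    (hρ : 0 < ρ) (hκ : 0 < κ) (hNhat : 0 < Nhat)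
    (h1 : 0 < μP + γ - βP) (h2 : βP < μP + η)
    (hstab : γ * (βP + ρ * κ * Nhat) < (μP + η + ρ * κ * Nhat) * (μP + γ - βP)) :
    ∃ c1 c2 : ℝ, 0 < c1 ∧ 0 < c2 ∧ c2 = c1 + 1 / ρ ∧
      -c1 * (μP + η) - c1 * ρ * κ * Nhat + c2 * ρ * κ * Nhat + c2 * βP < 0 ∧
      -c2 * μP + c1 * γ - c2 * γ + c2 * βP < 0 :=
  lyapunov_coefficients_exist_general μP η γ βP ρ κ Nhat hβP hρ hκ hNhat h2 hstab
end

section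
/- Let c₁, c₂ > 0 with c₂ = c₁ + 1/ρ, and define V(N, P_S, P_H) = (N - N̂) - N̂·ln(N/N̂) + c₁P_S + c₂P_H for N > 0, P_S, P_H ≥ 0, where N̂ = (β_N - μ_N)/δ. Along solutions of system (1.1), the derivative of V satisfies V̇ = -δ(N - N̂)² + P_S·[-c₁(μ_P+η) - c₁ρκN̂ + c₂ρκN̂ + c₂β_P] + P_H·[-c₂μ_P + c₁γ - c₂γ + c₂β_P]; in particular the cross terms in (N - N̂)P_S cancel. -/
/-! The Volterra function `x - c - c log (x / c)` has derivative `(1 - c / x) x'`, which turns the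
logistic part of `N'` into `-δ (N - N̂)²` and leaves the cross term `-κ (N - N̂) P_S`. Weighting
`P_H` by `c₂ = c₁ + 1/ρ` makes the infection terms `±ρκ N P_S` contribute exactly `κ N P_S`, which
cancels the `N P_S` part of that cross term. -/

open Real

theorem hasDerivAt_sub_sub_mul_log_div {f : ℝ → ℝ} {f' c t : ℝ} (hf : HasDerivAt f f' t)
    (ht : f t ≠ 0) :
    HasDerivAt (fun s => f s - c - c * log (f s / c)) ((1 - c / f t) * f') t := by
  rcases eq_or_ne c 0 with rfl | hc
  · simpa using hf
  have hlog : HasDerivAt (fun s => log (f s / c)) (f' / c / (f t / c)) t :=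
    (hf.div_const c).log (div_ne_zero ht hc)
  refine ((hf.sub_const c).sub (hlog.const_mul c)).congr_deriv ?_
  field_simp

theorem lyapunov_derivative_identity_general (βN μN δ κ ρ γ βP μP η c1 c2 : ℝ)
    (hδ : 0 < δ) (hρ : 0 < ρ)
    (hc : c2 = c1 + 1 / ρ)
    (N PS PH : ℝ → ℝ) (t : ℝ) (hNpos : 0 < N t)
    (hdN : HasDerivAt N ((βN - μN) * N t - δ * N t ^ 2 - κ * N t * PS t) t)
    (hdPS : HasDerivAt PS (-(μP + η) * PS t - ρ * κ * N t * PS t + γ * PH t) t)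
    (hdPH : HasDerivAt PH (-μP * PH t + ρ * κ * N t * PS t - γ * PH t + βP * (PS t + PH t)) t) :
    HasDerivAt (fun s => (N s - (βN - μN) / δ) -
        ((βN - μN) / δ) * Real.log (N s / ((βN - μN) / δ)) + c1 * PS s + c2 * PH s)
      (-δ * (N t - (βN - μN) / δ) ^ 2 +
        PS t * (-c1 * (μP + η) - c1 * ρ * κ * ((βN - μN) / δ) + c2 * ρ * κ * ((βN - μN) / δ) + c2 * βP) +
        PH t * (-c2 * μP + c1 * γ - c2 * γ + c2 * βP)) t := by
  refine (((hasDerivAt_sub_sub_mul_log_div hdN hNpos.ne').add (hdPS.const_mul c1)).add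
    (hdPH.const_mul c2)).congr_deriv ?_
  subst hc
  field_simp
  ring

theorem lyapunov_derivative_identity (βN μN δ κ ρ γ βP μP η c1 c2 : ℝ)
    (hβN : 0 < βN) (hμN : 0 < μN) (hδ : 0 < δ) (hκ : 0 < κ) (hρ : 0 < ρ)
    (hγ : 0 < γ) (hβP : 0 < βP) (hμP : 0 < μP) (hη : 0 < η)
    (hN : μN < βN) (hc1 : 0 < c1) (hc2 : 0 < c2) (hc : c2 = c1 + 1 / ρ)
    (N PS PH : ℝ → ℝ) (t : ℝ) (hNpos : 0 < N t)
    (hdN : HasDerivAt N ((βN - μN) * N t - δ * N t ^ 2 - κ * N t * PS t) t)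
    (hdPS : HasDerivAt PS (-(μP + η) * PS t - ρ * κ * N t * PS t + γ * PH t) t)
    (hdPH : HasDerivAt PH (-μP * PH t + ρ * κ * N t * PS t - γ * PH t + βP * (PS t + PH t)) t) :
    HasDerivAt (fun s => (N s - (βN - μN) / δ) -
        ((βN - μN) / δ) * Real.log (N s / ((βN - μN) / δ)) + c1 * PS s + c2 * PH s)
      (-δ * (N t - (βN - μN) / δ) ^ 2 +
        PS t * (-c1 * (μP + η) - c1 * ρ * κ * ((βN - μN) / δ) + c2 * ρ * κ * ((βN - μN) / δ) + c2 * βP) +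
        PH t * (-c2 * μP + c1 * γ - c2 * γ + c2 * βP)) t :=
  lyapunov_derivative_identity_general βN μN δ κ ρ γ βP μP η c1 c2 hδ hρ hc N PS PH t hNpos hdN hdPS
    hdPH
end

section
/- Along any nonnegative solution of system (1.1) with N(t) ≤ N* for all t ≥ 0, the weighted quantity W(t) = ρ(P̃_H - P̃_S)N(t) + P̃_S P_S(t) + P̃_H P_H(t) satisfies the differential inequality W'(t) ≤ -min(μ_N, λ*)·W(t) + ρ(P̃_H - P̃_S)β_N N*, where (P̃_S, P̃_H) is the positive left eigenvector of M associated with eigenvalue -λ* and satisfying P̃_H > P̃_S > 0. Consequently, limsup_{t→∞} W(t) ≤ ρ(P̃_H - P̃_S)β_N N*/min(μ_N, λ*). -/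
/-!
Weighting the nutrient by `ρ (P̃_H - P̃_S)` makes the consumption terms `κ N P_S` cancel in
`W' = ρ (P̃_H - P̃_S) N' + P̃_S P_S' + P̃_H P_H'`, and because `(P̃_S, P̃_H)` is a left eigenvector
of the linear part for `-λ*`, what remains of the phage part is `-λ* (P̃_S P_S + P̃_H P_H)`.
Dropping `-δ N²` and bounding `β_N N ≤ β_N N*` leaves `W' ≤ -m W + C` with `m = min(μ_N, λ*)`
and `C = ρ (P̃_H - P̃_S) β_N N*`; Grönwall's bound for the negative rate `-m` tends to `C / m`.
-/

open Filter Topology Real Set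

section Gronwall

theorem tendsto_gronwallBound_of_neg {δ K ε : ℝ} (hK : K < 0) :
    Tendsto (gronwallBound δ K ε) atTop (𝓝 (-ε / K)) := by
  rw [gronwallBound_of_K_ne_0 hK.ne]
  have hexp : Tendsto (fun x => exp (K * x)) atTop (𝓝 0) :=
    tendsto_exp_atBot.comp (tendsto_id.const_mul_atTop_of_neg hK)
  convert (hexp.const_mul δ).add ((hexp.sub_const 1).const_mul (ε / K)) using 2
  ring

variable {W D : ℝ → ℝ} {K ε : ℝ}

theorem le_gronwallBound_of_hasDerivAt (hW : ∀ t, 0 ≤ t → HasDerivAt W (D t) t)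
    (hD : ∀ t, 0 ≤ t → D t ≤ K * W t + ε) {t : ℝ} (ht : 0 ≤ t) :
    W t ≤ gronwallBound (W 0) K ε t := by
  have hcont : ContinuousOn W (Icc 0 t) := fun s hs => (hW s hs.1).continuousAt.continuousWithinAt
  simpa using le_gronwallBound_of_liminf_deriv_right_le hcont
    (fun s hs _ hr => (hW s hs.1).hasDerivWithinAt.liminf_right_slope_le hr) le_rfl
    (fun s hs => hD s hs.1) t ⟨ht, le_rfl⟩

theorem limsup_le_of_hasDerivAt_le_neg_mul_add {m C : ℝ} (hm : 0 < m)
    (hW : ∀ t, 0 ≤ t → HasDerivAt W (D t) t) (hD : ∀ t, 0 ≤ t → D t ≤ -m * W t + C)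
    (hcobdd : IsCoboundedUnder (· ≤ ·) atTop W) :
    limsup W atTop ≤ C / m := by
  have hlim : Tendsto (gronwallBound (W 0) (-m) C) atTop (𝓝 (C / m)) := by
    simpa only [neg_div_neg_eq] using
      tendsto_gronwallBound_of_neg (δ := W 0) (ε := C) (neg_lt_zero.2 hm)
  have hle : W ≤ᶠ[atTop] gronwallBound (W 0) (-m) C :=
    (eventually_ge_atTop 0).mono fun t ht => le_gronwallBound_of_hasDerivAt hW hD ht
  exact (limsup_le_limsup hle hcobdd hlim.isBoundedUnder_le).trans_eq hlim.limsup_eq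

end Gronwall

section PhageModel

variable {βN μN δ κ ρ γ βP μP η lamStar PtS PtH : ℝ}

theorem weighted_rate_eq
    (heig1 : PtS * (-(μP + η)) + PtH * βP = -lamStar * PtS)
    (heig2 : PtS * γ + PtH * (βP - μP - γ) = -lamStar * PtH) (n ps ph : ℝ) :
    ρ * (PtH - PtS) * ((βN - μN) * n - δ * n ^ 2 - κ * n * ps)
        + PtS * (-(μP + η) * ps - ρ * κ * n * ps + γ * ph)
        + PtH * (-μP * ph + ρ * κ * n * ps - γ * ph + βP * (ps + ph)) =
      ρ * (PtH - PtS) * ((βN - μN) * n - δ * n ^ 2) - lamStar * (PtS * ps + PtH * ph) := by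
  linear_combination ps * heig1 + ph * heig2

theorem weighted_rate_le {Nstar : ℝ} (hβN : 0 ≤ βN) (hδ : 0 ≤ δ) (hρ : 0 ≤ ρ)
    (hPtS : 0 ≤ PtS) (hPtSH : PtS ≤ PtH)
    (heig1 : PtS * (-(μP + η)) + PtH * βP = -lamStar * PtS)
    (heig2 : PtS * γ + PtH * (βP - μP - γ) = -lamStar * PtH)
    {n ps ph : ℝ} (hn : 0 ≤ n) (hps : 0 ≤ ps) (hph : 0 ≤ ph) (hnN : n ≤ Nstar) :
    ρ * (PtH - PtS) * ((βN - μN) * n - δ * n ^ 2 - κ * n * ps)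
        + PtS * (-(μP + η) * ps - ρ * κ * n * ps + γ * ph)
        + PtH * (-μP * ph + ρ * κ * n * ps - γ * ph + βP * (ps + ph)) ≤
      -(min μN lamStar) * (ρ * (PtH - PtS) * n + PtS * ps + PtH * ph)
        + ρ * (PtH - PtS) * βN * Nstar := by
  rw [weighted_rate_eq heig1 heig2]
  have hA : 0 ≤ ρ * (PtH - PtS) := mul_nonneg hρ (sub_nonneg.2 hPtSH)
  have hQ : 0 ≤ PtS * ps + PtH * ph := by
    have := hPtS.trans hPtSH
    positivity
  have hlogistic : βN * n - δ * n ^ 2 ≤ βN * Nstar := by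
    nlinarith [mul_le_mul_of_nonneg_left hnN hβN, mul_nonneg hδ (sq_nonneg n)]
  have hμ : min μN lamStar * n ≤ μN * n := mul_le_mul_of_nonneg_right (min_le_left _ _) hn
  have hlam : min μN lamStar * (PtS * ps + PtH * ph) ≤ lamStar * (PtS * ps + PtH * ph) :=
    mul_le_mul_of_nonneg_right (min_le_right _ _) hQ
  linarith [mul_le_mul_of_nonneg_left hlogistic hA, mul_le_mul_of_nonneg_left hμ hA]

end PhageModel

theorem dissipativity_inequality_general (βN μN δ κ ρ γ βP μP η lamStar PtS PtH Nstar : ℝ)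
    (hβN : 0 < βN) (hμN : 0 < μN) (hδ : 0 < δ) (hρ : 0 < ρ)
    (hlam : 0 < lamStar) (hPtS : 0 < PtS) (hPtSH : PtS < PtH)
    (heig1 : PtS * (-(μP + η)) + PtH * βP = -lamStar * PtS)
    (heig2 : PtS * γ + PtH * (βP - μP - γ) = -lamStar * PtH)
    (N PS PH : ℝ → ℝ)
    (hnonneg : ∀ t : ℝ, 0 ≤ t → 0 ≤ N t ∧ 0 ≤ PS t ∧ 0 ≤ PH t)
    (hbound : ∀ t : ℝ, 0 ≤ t → N t ≤ Nstar)
    (hdN : ∀ t : ℝ, HasDerivAt N ((βN - μN) * N t - δ * N t ^ 2 - κ * N t * PS t) t)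
    (hdPS : ∀ t : ℝ, HasDerivAt PS (-(μP + η) * PS t - ρ * κ * N t * PS t + γ * PH t) t)
    (hdPH : ∀ t : ℝ, HasDerivAt PH
      (-μP * PH t + ρ * κ * N t * PS t - γ * PH t + βP * (PS t + PH t)) t) :
    (∀ t : ℝ, 0 ≤ t →
      deriv (fun s => ρ * (PtH - PtS) * N s + PtS * PS s + PtH * PH s) t ≤
        -(min μN lamStar) * (ρ * (PtH - PtS) * N t + PtS * PS t + PtH * PH t) +
          ρ * (PtH - PtS) * βN * Nstar) ∧
    Filter.limsup (fun t => ρ * (PtH - PtS) * N t + PtS * PS t + PtH * PH t) Filter.atTop ≤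
      ρ * (PtH - PtS) * βN * Nstar / min μN lamStar := by
  have hm : 0 < min μN lamStar := lt_min hμN hlam
  have hW : ∀ t, HasDerivAt (fun s => ρ * (PtH - PtS) * N s + PtS * PS s + PtH * PH s)
      (ρ * (PtH - PtS) * ((βN - μN) * N t - δ * N t ^ 2 - κ * N t * PS t)
        + PtS * (-(μP + η) * PS t - ρ * κ * N t * PS t + γ * PH t)
        + PtH * (-μP * PH t + ρ * κ * N t * PS t - γ * PH t + βP * (PS t + PH t))) t :=
    fun t => (((hdN t).const_mul _).add ((hdPS t).const_mul PtS)).add ((hdPH t).const_mul PtH)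
  have hrate : ∀ t : ℝ, 0 ≤ t → _ := fun t ht =>
    have ⟨hN0, hPS0, hPH0⟩ := hnonneg t ht
    weighted_rate_le (μN := μN) (κ := κ) hβN.le hδ.le hρ.le hPtS.le hPtSH.le heig1 heig2
      hN0 hPS0 hPH0 (hbound t ht)
  refine ⟨fun t ht => (hW t).deriv ▸ hrate t ht,
    limsup_le_of_hasDerivAt_le_neg_mul_add hm (fun t _ => hW t) hrate ?_⟩
  refine isCoboundedUnder_le_of_eventually_le atTop (x := 0) ?_
  filter_upwards [eventually_ge_atTop 0] with t ht
  obtain ⟨hN0, hPS0, hPH0⟩ := hnonneg t ht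
  have := hPtS.trans hPtSH
  have : 0 ≤ PtH - PtS := sub_nonneg.2 hPtSH.le
  positivity

theorem dissipativity_inequality (βN μN δ κ ρ γ βP μP η lamStar PtS PtH Nstar : ℝ)
    (hβN : 0 < βN) (hμN : 0 < μN) (hδ : 0 < δ) (hκ : 0 < κ) (hρ : 0 < ρ)
    (hγ : 0 < γ) (hβP : 0 < βP) (hμP : 0 < μP) (hη : 0 < η)
    (hN : μN < βN) (hP : μP < βP) (hPη : βP < μP + η)
    (hext : (βP - μP - γ) * (μP + η) + βP * γ < 0)
    (hlam : 0 < lamStar) (hPtS : 0 < PtS) (hPtSH : PtS < PtH)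
    (heig1 : PtS * (-(μP + η)) + PtH * βP = -lamStar * PtS)
    (heig2 : PtS * γ + PtH * (βP - μP - γ) = -lamStar * PtH)
    (N PS PH : ℝ → ℝ)
    (hnonneg : ∀ t : ℝ, 0 ≤ t → 0 ≤ N t ∧ 0 ≤ PS t ∧ 0 ≤ PH t)
    (hbound : ∀ t : ℝ, 0 ≤ t → N t ≤ Nstar)
    (hdN : ∀ t : ℝ, HasDerivAt N ((βN - μN) * N t - δ * N t ^ 2 - κ * N t * PS t) t)
    (hdPS : ∀ t : ℝ, HasDerivAt PS (-(μP + η) * PS t - ρ * κ * N t * PS t + γ * PH t) t)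
    (hdPH : ∀ t : ℝ, HasDerivAt PH
      (-μP * PH t + ρ * κ * N t * PS t - γ * PH t + βP * (PS t + PH t)) t) :
    (∀ t : ℝ, 0 ≤ t →
      deriv (fun s => ρ * (PtH - PtS) * N s + PtS * PS s + PtH * PH s) t ≤
        -(min μN lamStar) * (ρ * (PtH - PtS) * N t + PtS * PS t + PtH * PH t) +
          ρ * (PtH - PtS) * βN * Nstar) ∧
    Filter.limsup (fun t => ρ * (PtH - PtS) * N t + PtS * PS t + PtH * PH t) Filter.atTop ≤
      ρ * (PtH - PtS) * βN * Nstar / min μN lamStar :=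
  dissipativity_inequality_general βN μN δ κ ρ γ βP μP η lamStar PtS PtH Nstar hβN hμN hδ hρ hlam
    hPtS hPtSH heig1 heig2 N PS PH hnonneg hbound hdN hdPS hdPH
end

section
/- Suppose the interior equilibrium E* exists (i.e., (β_N-μ_N)(β_P-μ_P)κρ + δ(β_P-μ_P)(μ_P+η) > -δγ(β_P-μ_P-η)). The coefficient p₃ of the characteristic polynomial λ³ + p₁λ² + p₂λ + p₃ of the Jacobian at E* equals [(β_P-μ_P-γ)(μ_P+η) + γβ_P]·[-δ(β_P-μ_P-γ)(μ_P+η) - γδβ_P - κρ(β_P-μ_P)(β_N-μ_N)]/(κρ(β_P-μ_P)), and under the standing assumptions p₃ > 0. -/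
/-!
At the equilibrium the `P`-equation gives `(βP - μP) κ ρ N* = -A` with
`A = (βP - μP - γ)(μP + η) + γ βP`, and this relation makes the (1,1) cofactor
of the Jacobian vanish, so that `p₃ = -det J = ρ κ² (βP - μP) N* P_S*`.
The `N`-equation gives `κ ρ (βP - μP) κ P_S* = -B`, where `B` is the second factor of the formula,
hence `p₃ = A B / (κ ρ (βP - μP))`.
The standing assumption says `A < 0` and the existence condition says `B < 0`, so `p₃ > 0`.
-/

theorem Matrix.charpoly_coeff_zero_fin_three {R : Type*} [CommRing R]
    (M : Matrix (Fin 3) (Fin 3) R) : M.charpoly.coeff 0 = -M.det := by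
  simp [M.det_eq_sign_charpoly_coeff, pow_succ]

theorem det_jacobian_of_P_equilibrium {R : Type*} [CommRing R]
    {βN μN δ κ ρ γ βP μP η N P : R}
    (hN : (βP - μP) * κ * ρ * N = -((βP - μP) * (μP + η)) - γ * (βP - μP - η)) :
    (!![βN - μN - 2 * δ * N - κ * P, -(N * κ), 0;
        -(P * ρ * κ), -(μP + η + ρ * κ * N), γ;
        P * ρ * κ, ρ * κ * N + βP, βP - μP - γ] : Matrix (Fin 3) (Fin 3) R).det =
      -(ρ * κ ^ 2 * (βP - μP) * N * P) := by
  rw [Matrix.det_fin_three]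
  simp only [Matrix.of_apply, Matrix.cons_val', Matrix.cons_val_zero, Matrix.cons_val_one,
    Matrix.cons_val_two, Matrix.empty_val', Matrix.cons_val_fin_one, Matrix.head_cons,
    Matrix.head_fin_const, Matrix.tail_cons]
  linear_combination (-(βN - μN - 2 * δ * N - κ * P)) * hN

theorem p3_formula_and_positive_general (βN μN δ κ ρ γ βP μP η Nstar PSstar : ℝ)
    (hκ : 0 < κ) (hρ : 0 < ρ) (hP : μP < βP)
    (hext : (βP - μP - γ) * (μP + η) + βP * γ < 0)
    (hexist : (βN - μN) * (βP - μP) * κ * ρ + δ * (βP - μP) * (μP + η) >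
      -(δ * γ * (βP - μP - η)))
    (hNstar : Nstar = (-((βP - μP) * (μP + η)) - γ * (βP - μP - η)) / ((βP - μP) * κ * ρ))
    (hPSstar : PSstar = ((βN - μN) - δ * Nstar) / κ) :
    let J : Matrix (Fin 3) (Fin 3) ℝ :=
      !![βN - μN - 2 * δ * Nstar - κ * PSstar, -(Nstar * κ), 0;
         -(PSstar * ρ * κ), -(μP + η + ρ * κ * Nstar), γ;
         PSstar * ρ * κ, ρ * κ * Nstar + βP, βP - μP - γ]
    let p3 := ((βP - μP - γ) * (μP + η) + γ * βP) *
      (-(δ * (βP - μP - γ) * (μP + η)) - γ * δ * βP - κ * ρ * (βP - μP) * (βN - μN)) /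
      (κ * ρ * (βP - μP))
    (Matrix.charpoly J).coeff 0 = p3 ∧ 0 < p3 := by
  intro J p3
  have hs : 0 < βP - μP := sub_pos.mpr hP
  have hN : (βP - μP) * κ * ρ * Nstar = -((βP - μP) * (μP + η)) - γ * (βP - μP - η) := by
    rw [hNstar]; field_simp
  have hPS : κ * PSstar = βN - μN - δ * Nstar := by
    rw [hPSstar]; field_simp
  have hA : (βP - μP - γ) * (μP + η) + γ * βP < 0 := by linarith
  have hB : -(δ * (βP - μP - γ) * (μP + η)) - γ * δ * βP - κ * ρ * (βP - μP) * (βN - μN) < 0 := by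
    linear_combination hexist
  refine ⟨?_, div_pos (mul_pos_of_neg_of_neg hA hB) (by positivity)⟩
  rw [Matrix.charpoly_coeff_zero_fin_three, det_jacobian_of_P_equilibrium hN,
    neg_neg, eq_div_iff (by positivity)]
  linear_combination
    (κ * ρ * (βP - μP) * (βN - μN) -
        δ * (κ * ρ * (βP - μP) * Nstar - ((βP - μP - γ) * (μP + η) + γ * βP))) * hN +
      (κ * ρ * (βP - μP)) ^ 2 * Nstar * hPS

theorem p3_formula_and_positive (βN μN δ κ ρ γ βP μP η Nstar PSstar PHstar : ℝ)
    (hβN : 0 < βN) (hμN : 0 < μN) (hδ : 0 < δ) (hκ : 0 < κ) (hρ : 0 < ρ)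
    (hγ : 0 < γ) (hβP : 0 < βP) (hμP : 0 < μP) (hη : 0 < η)
    (hN : μN < βN) (hP : μP < βP) (hPη : βP < μP + η)
    (hext : (βP - μP - γ) * (μP + η) + βP * γ < 0)
    (hexist : (βN - μN) * (βP - μP) * κ * ρ + δ * (βP - μP) * (μP + η) >
      -(δ * γ * (βP - μP - η)))
    (hNstar : Nstar = (-((βP - μP) * (μP + η)) - γ * (βP - μP - η)) / ((βP - μP) * κ * ρ))
    (hPSstar : PSstar = ((βN - μN) - δ * Nstar) / κ)
    (hPHstar : PHstar = ((μP + η - βP) / (βP - μP)) * PSstar) :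
    let J : Matrix (Fin 3) (Fin 3) ℝ :=
      !![βN - μN - 2 * δ * Nstar - κ * PSstar, -(Nstar * κ), 0;
         -(PSstar * ρ * κ), -(μP + η + ρ * κ * Nstar), γ;
         PSstar * ρ * κ, ρ * κ * Nstar + βP, βP - μP - γ]
    let p3 := ((βP - μP - γ) * (μP + η) + γ * βP) *
      (-(δ * (βP - μP - γ) * (μP + η)) - γ * δ * βP - κ * ρ * (βP - μP) * (βN - μN)) /
      (κ * ρ * (βP - μP))
    (Matrix.charpoly J).coeff 0 = p3 ∧ 0 < p3 :=
  p3_formula_and_positive_general βN μN δ κ ρ γ βP μP η Nstar PSstar hκ hρ hP hext hexist hNstar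
    hPSstar
end
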